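/- Algorithmic strengthening for linear entries: if Γ₁, x : lin p ⊢ P ▷ Γ₂, x : lin p is derivable in the algorithmic typing system, then Γ₁ ⊢ P ▷ Γ₂ is derivable. -/

import Mathlib

/-! Qualified session types for the pi calculus (Giunti),
    algorithmic type checking and split-based declarative system. -/

inductive Qual : Type
| lin : Qual
| un : Qual

mutual
inductive PreTy : Type
| recv : Ty → EpTy → PreTy
| send : Ty → EpTy → PreTy
| ende : PreTy
inductive EpTy : Type
| q : Qual → PreTy → EpTy
| var : Nat → EpTy
| mu : EpTy → EpTy
inductive Ty : Type
| ep : EpTy → Ty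
| ch : EpTy → EpTy → Ty
end

mutual
def PreTy.subst : PreTy → Nat → EpTy → PreTy
| .recv T S, n, R => .recv (T.subst n R) (S.subst n R)
| .send T S, n, R => .send (T.subst n R) (S.subst n R)
| .ende, _, _ => .ende
def EpTy.subst : EpTy → Nat → EpTy → EpTy
| .q qu p, n, R => .q qu (p.subst n R)
| .var a, n, R => if a = n then R else .var a
| .mu S, n, R => .mu (S.subst (n+1) R)
def Ty.subst : Ty → Nat → EpTy → Ty
| .ep S, n, R => .ep (S.subst n R)
| .ch S1 S2, n, R => .ch (S1.subst n R) (S2.subst n R)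
end

/-- Equi-recursive unfolding of an end-point type to a head (qualified) form. -/
inductive Unf : EpTy → EpTy → Prop
| refl (q p) : Unf (.q q p) (.q q p)
| mu {S S'} : Unf (S.subst 0 (.mu S)) S' → Unf (.mu S) S'

/-- Algorithmic entries: an end-point type or the void marker. -/
inductive Entry : Type
| ep : EpTy → Entry
| void : Entry

/-- A context entry: a single entry or a channel pair of entries. -/
inductive CEntry : Type
| single : Entry → CEntry
| chan : Entry → Entry → CEntry

def Ty.toC : Ty → CEntry
| .ep S => .single (.ep S)
| .ch S1 S2 => .chan (.ep S1) (.ep S2)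

def unEnd : Entry := .ep (.q .un .ende)

/-- Safety predicate on context entries. -/
inductive SafeC : CEntry → Prop
| single (M) : SafeC (.single M)
| voidL (N) : SafeC (.chan .void N)
| voidR (M) : SafeC (.chan M .void)
| endL (N) : SafeC (.chan unEnd N)
| endR (M) : SafeC (.chan M unEnd)
| linlin {T : Ty} {S1 S2 : EpTy} : SafeC T.toC → SafeC (.chan (.ep S1) (.ep S2)) →
    SafeC (.chan (.ep (.q .lin (.recv T S1))) (.ep (.q .lin (.send T S2))))
| unun {T : Ty} {S1 S2 : EpTy} : SafeC T.toC →
    SafeC (.chan (.ep (.q .un (.recv T S1))) (.ep (.q .un (.send T S2))))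

/-- Unrestricted entries. -/
inductive UnE : Entry → Prop
| void : UnE .void
| un (p) : UnE (.ep (.q .un p))

def UnC : CEntry → Prop
| .single M => UnE M
| .chan M N => UnE M ∧ UnE N

/-- Pi-calculus processes with annotated restriction. -/
inductive Proc : Type
| nil : Proc
| par : Proc → Proc → Proc
| repl : Proc → Proc
| nu : String → Ty → Proc → Proc
| out : String → String → Proc → Proc
| inp : String → String → Proc → Proc

/-- Free variables of a process. -/
def fv : Proc → Set String
| .nil => ∅
| .par P Q => fv P ∪ fv Q
| .repl P => fv P
| .nu x _ P => fv P \ {x}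
| .out x y P => {x} ∪ ({y} ∪ fv P)
| .inp x y P => {x} ∪ (fv P \ {y})

/-- Algorithmic typing contexts. -/
abbrev Ctx := String → Option CEntry

def Ctx.upd (Γ : Ctx) (x : String) (E : CEntry) : Ctx :=
  fun y => if y = x then some E else Γ y

def Ctx.del (Γ : Ctx) (x : String) : Ctx :=
  fun y => if y = x then none else Γ y

def SafeCtx (Γ : Ctx) : Prop := ∀ x E, Γ x = some E → SafeC E
def UnCtx (Γ : Ctx) : Prop := ∀ x E, Γ x = some E → UnC E

/-- Algorithmic value-checking judgment Γ ⊢ x : T ▷ Γ'. -/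
inductive CheckVar : Ctx → String → Ty → Ctx → Prop
| vL {Γ : Ctx} {x p} : Γ x = some (.single (.ep (.q .lin p))) →
    CheckVar Γ x (.ep (.q .lin p)) (Γ.upd x (.single .void))
| vU {Γ : Ctx} {x p} : Γ x = some (.single (.ep (.q .un p))) →
    CheckVar Γ x (.ep (.q .un p)) Γ
| vLLl {Γ : Ctx} {x p1 p2} : Γ x = some (.chan (.ep (.q .lin p1)) (.ep (.q .lin p2))) →
    CheckVar Γ x (.ch (.q .lin p1) (.q .lin p2)) (Γ.upd x (.chan .void .void))
| vLLr {Γ : Ctx} {x p1 p2} : Γ x = some (.chan (.ep (.q .lin p1)) (.ep (.q .lin p2))) →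
    CheckVar Γ x (.ch (.q .lin p2) (.q .lin p1)) (Γ.upd x (.chan .void .void))
| vLl {Γ : Ctx} {x p N} : Γ x = some (.chan (.ep (.q .lin p)) N) →
    CheckVar Γ x (.ep (.q .lin p)) (Γ.upd x (.chan .void N))
| vLr {Γ : Ctx} {x p M} : Γ x = some (.chan M (.ep (.q .lin p))) →
    CheckVar Γ x (.ep (.q .lin p)) (Γ.upd x (.chan M .void))
| vUUl {Γ : Ctx} {x p1 p2} : Γ x = some (.chan (.ep (.q .un p1)) (.ep (.q .un p2))) →
    CheckVar Γ x (.ch (.q .un p1) (.q .un p2)) Γ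
| vUUr {Γ : Ctx} {x p1 p2} : Γ x = some (.chan (.ep (.q .un p1)) (.ep (.q .un p2))) →
    CheckVar Γ x (.ch (.q .un p2) (.q .un p1)) Γ
| vUl {Γ : Ctx} {x p N} : Γ x = some (.chan (.ep (.q .un p)) N) → N ≠ .ep (.q .un p) →
    CheckVar Γ x (.ep (.q .un p)) Γ
| vUr {Γ : Ctx} {x p M} : Γ x = some (.chan M (.ep (.q .un p))) → M ≠ .ep (.q .un p) →
    CheckVar Γ x (.ep (.q .un p)) Γ
| vEE {Γ : Ctx} {x} : Γ x = some (.chan unEnd unEnd) →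
    CheckVar Γ x (.ep (.q .un .ende)) Γ

/-- Algorithmic process-checking judgment Γ₁ ⊢ P ▷ Γ₂. -/
inductive Check : Ctx → Proc → Ctx → Prop
| inact (Γ : Ctx) : Check Γ .nil Γ
| par {Γ1 Γ2 Γ3 : Ctx} {P Q} : Check Γ1 P Γ2 → Check Γ2 Q Γ3 →
    Check Γ1 (.par P Q) Γ3
| repl {Γ : Ctx} {P} : Check Γ P Γ → Check Γ (.repl P) Γ
| res {Γ1 Γ2 : Ctx} {y T P O} : SafeC (Ty.toC T) → Γ1 y = none →
    Check (Γ1.upd y T.toC) P Γ2 → Γ2 y = some O → UnC O →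
    Check Γ1 (.nu y T P) (Γ2.del y)
| outL {Γ1 Γ2 Γ3 : Ctx} {x y T S P M} :
    Γ1 x = some (.single (.ep (.q .lin (.send T S)))) →
    CheckVar (Γ1.upd x (.single .void)) y T Γ2 →
    Check (Γ2.upd x (.single (.ep S))) P Γ3 →
    Γ3 x = some (.single M) → UnE M →
    Check Γ1 (.out x y P) (Γ3.upd x (.single .void))
| outLl {Γ1 Γ2 : Ctx} {x y T S N P} :
    Γ1 x = some (.chan (.ep (.q .lin (.send T S))) N) →
    Check (Γ1.upd x (.single (.ep (.q .lin (.send T S))))) (.out x y P) Γ2 →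
    Γ2 x = some (.single .void) →
    Check Γ1 (.out x y P) (Γ2.upd x (.chan .void N))
| outLr {Γ1 Γ2 : Ctx} {x y T S M P} :
    Γ1 x = some (.chan M (.ep (.q .lin (.send T S)))) →
    Check (Γ1.upd x (.single (.ep (.q .lin (.send T S))))) (.out x y P) Γ2 →
    Γ2 x = some (.single .void) →
    Check Γ1 (.out x y P) (Γ2.upd x (.chan M .void))
| outUn {Γ1 Γ2 Γ3 : Ctx} {x y T S P} :
    Γ1 x = some (.single (.ep S)) → Unf S (.q .un (.send T S)) →
    CheckVar Γ1 y T Γ2 → Check Γ2 P Γ3 →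
    Check Γ1 (.out x y P) Γ3
| outUnl {Γ1 Γ2 Γ3 : Ctx} {x y T S N P} :
    Γ1 x = some (.chan (.ep S) N) → Unf S (.q .un (.send T S)) →
    CheckVar Γ1 y T Γ2 → Check Γ2 P Γ3 →
    Check Γ1 (.out x y P) Γ3
| outUnr {Γ1 Γ2 Γ3 : Ctx} {x y T S M P} :
    Γ1 x = some (.chan M (.ep S)) → Unf S (.q .un (.send T S)) →
    CheckVar Γ1 y T Γ2 → Check Γ2 P Γ3 →
    Check Γ1 (.out x y P) Γ3
| inL {Γ1 Γ2 : Ctx} {x y T S P M O} :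
    Γ1 x = some (.single (.ep (.q .lin (.recv T S)))) → Γ1 y = none →
    Check ((Γ1.upd x (.single (.ep S))).upd y T.toC) P Γ2 →
    Γ2 x = some (.single M) → UnE M → Γ2 y = some O → UnC O →
    Check Γ1 (.inp x y P) ((Γ2.del y).upd x (.single .void))
| inLl {Γ1 Γ2 : Ctx} {x y T S N P} :
    Γ1 x = some (.chan (.ep (.q .lin (.recv T S))) N) →
    Check (Γ1.upd x (.single (.ep (.q .lin (.recv T S))))) (.inp x y P) Γ2 →
    Γ2 x = some (.single .void) →
    Check Γ1 (.inp x y P) (Γ2.upd x (.chan .void N))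
| inLr {Γ1 Γ2 : Ctx} {x y T S M P} :
    Γ1 x = some (.chan M (.ep (.q .lin (.recv T S)))) →
    Check (Γ1.upd x (.single (.ep (.q .lin (.recv T S))))) (.inp x y P) Γ2 →
    Γ2 x = some (.single .void) →
    Check Γ1 (.inp x y P) (Γ2.upd x (.chan M .void))
| inUn {Γ1 Γ2 : Ctx} {x y T S P O} :
    Γ1 x = some (.single (.ep S)) → Unf S (.q .un (.recv T S)) → Γ1 y = none →
    Check (Γ1.upd y T.toC) P Γ2 → Γ2 y = some O → UnC O →
    Check Γ1 (.inp x y P) (Γ2.del y)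
| inUnl {Γ1 Γ2 : Ctx} {x y T S N P O} :
    Γ1 x = some (.chan (.ep S) N) → Unf S (.q .un (.recv T S)) → Γ1 y = none →
    Check (Γ1.upd y T.toC) P Γ2 → Γ2 y = some O → UnC O →
    Check Γ1 (.inp x y P) (Γ2.del y)
| inUnr {Γ1 Γ2 : Ctx} {x y T S M P O} :
    Γ1 x = some (.chan M (.ep S)) → Unf S (.q .un (.recv T S)) → Γ1 y = none →
    Check (Γ1.upd y T.toC) P Γ2 → Γ2 y = some O → UnC O →
    Check Γ1 (.inp x y P) (Γ2.del y)

/-- One step of the algorithm: check(Γ,P) directly invokes check(Γ',P'). -/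
inductive Invokes : Ctx → Proc → Ctx → Proc → Prop
| par1 {Γ : Ctx} (P Q) : Invokes Γ (.par P Q) Γ P
| par2 {Γ Γ2 : Ctx} {P} (Q) : Check Γ P Γ2 → Invokes Γ (.par P Q) Γ2 Q
| repl {Γ : Ctx} (P) : Invokes Γ (.repl P) Γ P
| res {Γ : Ctx} {y T P} : SafeC (Ty.toC T) → Γ y = none →
    Invokes Γ (.nu y T P) (Γ.upd y T.toC) P
| outL {Γ Γ2 : Ctx} {x y T S P} :
    Γ x = some (.single (.ep (.q .lin (.send T S)))) →
    CheckVar (Γ.upd x (.single .void)) y T Γ2 →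
    Invokes Γ (.out x y P) (Γ2.upd x (.single (.ep S))) P
| outLl {Γ : Ctx} {x y T S N P} :
    Γ x = some (.chan (.ep (.q .lin (.send T S))) N) →
    Invokes Γ (.out x y P) (Γ.upd x (.single (.ep (.q .lin (.send T S))))) (.out x y P)
| outLr {Γ : Ctx} {x y T S M P} :
    Γ x = some (.chan M (.ep (.q .lin (.send T S)))) →
    Invokes Γ (.out x y P) (Γ.upd x (.single (.ep (.q .lin (.send T S))))) (.out x y P)
| outUn {Γ Γ2 : Ctx} {x y T S P} :
    Γ x = some (.single (.ep S)) → Unf S (.q .un (.send T S)) →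
    CheckVar Γ y T Γ2 → Invokes Γ (.out x y P) Γ2 P
| outUnl {Γ Γ2 : Ctx} {x y T S N P} :
    Γ x = some (.chan (.ep S) N) → Unf S (.q .un (.send T S)) →
    CheckVar Γ y T Γ2 → Invokes Γ (.out x y P) Γ2 P
| outUnr {Γ Γ2 : Ctx} {x y T S M P} :
    Γ x = some (.chan M (.ep S)) → Unf S (.q .un (.send T S)) →
    CheckVar Γ y T Γ2 → Invokes Γ (.out x y P) Γ2 P
| inL {Γ : Ctx} {x y T S P} :
    Γ x = some (.single (.ep (.q .lin (.recv T S)))) → Γ y = none →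
    Invokes Γ (.inp x y P) ((Γ.upd x (.single (.ep S))).upd y T.toC) P
| inLl {Γ : Ctx} {x y T S N P} :
    Γ x = some (.chan (.ep (.q .lin (.recv T S))) N) →
    Invokes Γ (.inp x y P) (Γ.upd x (.single (.ep (.q .lin (.recv T S))))) (.inp x y P)
| inLr {Γ : Ctx} {x y T S M P} :
    Γ x = some (.chan M (.ep (.q .lin (.recv T S)))) →
    Invokes Γ (.inp x y P) (Γ.upd x (.single (.ep (.q .lin (.recv T S))))) (.inp x y P)
| inUn {Γ : Ctx} {x y T S P} :
    Γ x = some (.single (.ep S)) → Unf S (.q .un (.recv T S)) → Γ y = none →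
    Invokes Γ (.inp x y P) (Γ.upd y T.toC) P
| inUnl {Γ : Ctx} {x y T S N P} :
    Γ x = some (.chan (.ep S) N) → Unf S (.q .un (.recv T S)) → Γ y = none →
    Invokes Γ (.inp x y P) (Γ.upd y T.toC) P
| inUnr {Γ : Ctx} {x y T S M P} :
    Γ x = some (.chan M (.ep S)) → Unf S (.q .un (.recv T S)) → Γ y = none →
    Invokes Γ (.inp x y P) (Γ.upd y T.toC) P

/-- check(Γ',P') is (reflexively-transitively) invoked during check(Γ,P). -/
def Reaches : Ctx × Proc → Ctx × Proc → Prop :=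
  Relation.ReflTransGen (fun a b => Invokes a.1 a.2 b.1 b.2)

/-! ### The split-based declarative system ⊢_D -/

abbrev DCtx := String → Option Ty

def DCtx.upd (I : DCtx) (x : String) (T : Ty) : DCtx :=
  fun y => if y = x then some T else I y

def UnT : Ty → Prop
| .ep (.q .un _) => True
| .ch (.q .un _) (.q .un _) => True
| _ => False

def UnD (I : DCtx) : Prop := ∀ x T, I x = some T → UnT T

/-- Context-splitting, entrywise. -/
inductive SplitE : Option Ty → Option Ty → Option Ty → Prop
| none : SplitE none none none
| unEp (p) : SplitE (some (.ep (.q .un p))) (some (.ep (.q .un p))) (some (.ep (.q .un p)))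
| unCh (p1 p2) : SplitE (some (.ch (.q .un p1) (.q .un p2)))
    (some (.ch (.q .un p1) (.q .un p2))) (some (.ch (.q .un p1) (.q .un p2)))
| linEpL (p) : SplitE (some (.ep (.q .lin p))) (some (.ep (.q .lin p))) none
| linEpR (p) : SplitE (some (.ep (.q .lin p))) none (some (.ep (.q .lin p)))
| linChL (p1 p2) : SplitE (some (.ch (.q .lin p1) (.q .lin p2)))
    (some (.ch (.q .lin p1) (.q .lin p2))) none
| linChR (p1 p2) : SplitE (some (.ch (.q .lin p1) (.q .lin p2)))
    none (some (.ch (.q .lin p1) (.q .lin p2)))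
| chSplit (p1 p2) : SplitE (some (.ch (.q .lin p1) (.q .lin p2)))
    (some (.ep (.q .lin p1))) (some (.ep (.q .lin p2)))
| mixL (p1 p2) : SplitE (some (.ch (.q .lin p1) (.q .un p2)))
    (some (.ch (.q .lin p1) (.q .un p2))) (some (.ep (.q .un p2)))
| mixR (p1 p2) : SplitE (some (.ch (.q .lin p1) (.q .un p2)))
    (some (.ep (.q .un p2))) (some (.ch (.q .lin p1) (.q .un p2)))

def DSplit (I I1 I2 : DCtx) : Prop := ∀ x, SplitE (I x) (I1 x) (I2 x)

/-- Declarative value typing. -/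
inductive DVal : DCtx → String → Ty → Prop
| var {I : DCtx} {x T} : I x = some T →
    (∀ y T', y ≠ x → I y = some T' → UnT T') → DVal I x T
| strength {I : DCtx} {v S p} : DVal I v (.ch S (.q .un p)) → DVal I v (.ep S)

/-- Declarative process typing I ⊢_D P. -/
inductive DTy : DCtx → Proc → Prop
| inact {I : DCtx} : UnD I → DTy I .nil
| par {I I1 I2 : DCtx} {P Q} : DSplit I I1 I2 → DTy I1 P → DTy I2 Q →
    DTy I (.par P Q)
| repl {I : DCtx} {P} : DTy I P → UnD I → DTy I (.repl P)
| res {I : DCtx} {x T P} : I x = none → SafeC (Ty.toC T) →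
    DTy (I.upd x T) P → DTy I (.nu x T P)
| inn {I : DCtx} {x y S0 qu T S P} :
    I x = some (.ep S0) → Unf S0 (.q qu (.recv T S)) → (qu = .un → S = S0) →
    I y = none → DTy ((I.upd x (.ep S)).upd y T) P →
    DTy I (.inp x y P)
| out {I I1 I2 : DCtx} {x y S0 qu T S P} :
    DSplit I I1 I2 → DVal I1 y T →
    I2 x = some (.ep S0) → Unf S0 (.q qu (.send T S)) → (qu = .un → S = S0) →
    DTy (I2.upd x (.ep S)) P →
    DTy I (.out x y P)
| innC {I : DCtx} {x y S0 S' qu T S P} :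
    I x = some (.ch S0 S') → Unf S0 (.q qu (.recv T S)) → (qu = .un → S = S0) →
    I y = none → DTy ((I.upd x (.ch S S')).upd y T) P →
    DTy I (.inp x y P)
| outC {I I1 I2 : DCtx} {x y S0 S' qu T S P} :
    DSplit I I1 I2 → DVal I1 y T →
    I2 x = some (.ch S0 S') → Unf S0 (.q qu (.send T S)) → (qu = .un → S = S0) →
    DTy (I2.upd x (.ch S S')) P →
    DTy I (.out x y P)

/-! ### Used closure, used map, nabla, and update -/

/-- The partial used-closure operation on entries, as a relation. -/
inductive ClosE : Entry → Entry → Entry → Prop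
| vv : ClosE .void .void .void
| ll (p) : ClosE (.ep (.q .lin p)) (.ep (.q .lin p)) .void
| lv (p) : ClosE (.ep (.q .lin p)) .void (.ep (.q .lin p))
| uu (p) : ClosE (.ep (.q .un p)) (.ep (.q .un p)) (.ep (.q .un p))

inductive ClosC : CEntry → CEntry → CEntry → Prop
| single {M M' O} : ClosE M M' O → ClosC (.single M) (.single M') (.single O)
| chan {M M' N N' O O'} : ClosE M M' O → ClosE N N' O' →
    ClosC (.chan M N) (.chan M' N') (.chan O O')

/-- Δ is the used closure Γ₁ ▷ Γ₂ of contexts (defined pointwise). -/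
def ClosCtx (Γ1 Γ2 Δ : Ctx) : Prop :=
  ∀ x, (Γ1 x = none ∧ Γ2 x = none ∧ Δ x = none) ∨
    ∃ E E' O, Γ1 x = some E ∧ Γ2 x = some E' ∧ ClosC E E' O ∧ Δ x = some O

def Entry.used : Entry → EpTy
| .void => .q .un .ende
| .ep S => S

def CEntry.used : CEntry → Ty
| .single M => .ep M.used
| .chan M N => .ch M.used N.used

/-- Project an algorithmic context to a declarative one via used. -/
def usedCtx (Δ : Ctx) : DCtx := fun x => (Δ x).map CEntry.used

def Entry.isLin : Entry → Bool
| .ep (.q .lin _) => true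
| _ => false

def Entry.isVoid : Entry → Bool
| .void => true
| _ => false

/-- The ∇ operation on entries. -/
def CEntry.nabla : CEntry → CEntry
| .single M => if M.isLin then .single .void else .single M
| .chan M N =>
    if (M.isLin && (N.isLin || N.isVoid)) || (N.isLin && M.isVoid)
    then .chan .void .void else .chan M N

def nablaCtx (Γ : Ctx) : Ctx := fun x => (Γ x).map CEntry.nabla

/-- The (partial) void-filling update ⊎ on entries, as a relation. -/
inductive UpdE : Entry → Entry → Entry → Prop
| void (M) : UpdE .void M M
| same (M) : UpdE M M M

inductive UpdC : CEntry → CEntry → CEntry → Prop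
| single {M N O} : UpdE M N O → UpdC (.single M) (.single N) (.single O)
| chan {M1 M2 M N1 N2 N} : UpdE M1 M2 M → UpdE N1 N2 N →
    UpdC (.chan M1 N1) (.chan M2 N2) (.chan M N)

/-- Δ = Γ₁ ⊎ Γ (pointwise update of contexts). -/
def UpdCtx (Γ1 Γ Δ : Ctx) : Prop :=
  ∀ x, (Γ1 x = none ∧ Γ x = none ∧ Δ x = none) ∨
    ∃ E E' O, Γ1 x = some E ∧ Γ x = some E' ∧ UpdC E E' O ∧ Δ x = some O

/-- Structural congruence. -/
inductive SC : Proc → Proc → Prop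
| comm (P Q) : SC (.par P Q) (.par Q P)
| assoc (P Q R) : SC (.par (.par P Q) R) (.par P (.par Q R))
| parNil (P) : SC (.par P .nil) P
| replUnfold (P) : SC (.repl P) (.par P (.repl P))
| extrude {x T P Q} : x ∉ fv Q → SC (.par (.nu x T P) Q) (.nu x T (.par P Q))
| exch (x T1 y T2 P) : SC (.nu x T1 (.nu y T2 P)) (.nu y T2 (.nu x T1 P))
| nuNilEp (x p) : SC (.nu x (.ep (.q .un p)) .nil) .nil
| nuNilCh (x p1 p2) : SC (.nu x (.ch (.q .un p1) (.q .un p2)) .nil) .nil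
| refl (P) : SC P P
| symm {P Q} : SC P Q → SC Q P
| trans {P Q R} : SC P Q → SC Q R → SC P R
| parCong {P P' Q Q'} : SC P P' → SC Q Q' → SC (.par P Q) (.par P' Q')
| replCong {P P'} : SC P P' → SC (.repl P) (.repl P')
| nuCong {P P'} (x T) : SC P P' → SC (.nu x T P) (.nu x T P')
| outCong {P P'} (x y) : SC P P' → SC (.out x y P) (.out x y P')
| inpCong {P P'} (x y) : SC P P' → SC (.inp x y P) (.inp x y P')

/-! Algorithmic checking never creates a linear entry: each rule leaves such an entry unchanged,
replaces it by `∘`, or removes it together with its binder. Hence an entry `lin p` of the output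
context already sits, unchanged, in the input and in every intermediate context of the derivation.
No rule inspects a linear entry without consuming it, so this variable can be deleted from every
context of the derivation. -/

namespace Ctx

variable {Γ : Ctx} {x y : String} {E : CEntry}

lemma upd_apply_of_ne (h : x ≠ y) : Γ.upd y E x = Γ x := if_neg h

lemma del_apply_of_ne (h : x ≠ y) : Γ.del y x = Γ x := if_neg h

lemma del_upd_of_ne (h : x ≠ y) : (Γ.upd y E).del x = (Γ.del x).upd y E := by
  funext z; by_cases z = x <;> by_cases z = y <;> simp_all [del, upd]

lemma del_comm (x y : String) : (Γ.del y).del x = (Γ.del x).del y := by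
  funext z; by_cases z = x <;> by_cases z = y <;> simp_all [del]

end Ctx

theorem CheckVar.input_eq_of_lin_output {Γ1 Γ2 : Ctx} {y T x p} (h : CheckVar Γ1 y T Γ2)
    (hout : Γ2 x = some (.single (.ep (.q .lin p)))) : Γ1 x = Γ2 x := by
  cases h <;> by_cases x = y <;> simp_all [Ctx.upd]

theorem Check.input_eq_of_lin_output {Γ1 Γ2 : Ctx} {P x p} (h : Check Γ1 P Γ2)
    (hout : Γ2 x = some (.single (.ep (.q .lin p)))) : Γ1 x = Γ2 x := by
  induction h with
  | inact | repl => rfl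
  | par _ _ ihP ihQ => rw [ihP (ihQ hout ▸ hout), ihQ hout]
  | outUn _ _ hcv _ ih | outUnl _ _ hcv _ ih | outUnr _ _ hcv _ ih =>
    rw [hcv.input_eq_of_lin_output (ih hout ▸ hout), ih hout]
  | @outL _ _ _ x0 _ _ _ _ _ _ hcv _ _ _ ih =>
    by_cases hx0 : x = x0
    · simp_all [Ctx.upd]
    · simp only [Ctx.upd_apply_of_ne hx0] at hout ih ⊢
      have hmid := hcv.input_eq_of_lin_output ((ih hout).trans hout)
      rw [Ctx.upd_apply_of_ne hx0] at hmid
      rw [hmid, ih hout]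
  | @inL _ _ x0 y _ _ _ _ _ _ _ _ _ _ _ ih =>
    by_cases x = x0 <;> by_cases x = y <;> simp_all [Ctx.upd, Ctx.del]
  | @res _ _ y _ _ _ _ _ _ _ _ ih | @inUn _ _ _ y _ _ _ _ _ _ _ _ _ _ ih
  | @inUnl _ _ _ y _ _ _ _ _ _ _ _ _ _ _ ih | @inUnr _ _ _ y _ _ _ _ _ _ _ _ _ _ _ ih =>
    by_cases x = y <;> simp_all [Ctx.upd, Ctx.del]
  | @outLl _ _ x0 _ _ _ _ _ _ _ _ ih | @outLr _ _ x0 _ _ _ _ _ _ _ _ ih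
  | @inLl _ _ x0 _ _ _ _ _ _ _ _ ih | @inLr _ _ x0 _ _ _ _ _ _ _ _ ih =>
    by_cases x = x0 <;> simp_all [Ctx.upd]

theorem CheckVar.del_of_lin_output {Γ1 Γ2 : Ctx} {y T x p} (h : CheckVar Γ1 y T Γ2)
    (hout : Γ2 x = some (.single (.ep (.q .lin p)))) : CheckVar (Γ1.del x) y T (Γ2.del x) := by
  have hyx : y ≠ x := by
    rintro rfl
    have := h.input_eq_of_lin_output hout
    cases h <;> simp_all [Ctx.upd]
  have hΓ1 : Γ1.del x y = Γ1 y := Ctx.del_apply_of_ne hyx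
  cases h with
  | vL hy => rw [Ctx.del_upd_of_ne hyx.symm]; exact .vL (hΓ1 ▸ hy)
  | vU hy => exact .vU (hΓ1 ▸ hy)
  | vLLl hy => rw [Ctx.del_upd_of_ne hyx.symm]; exact .vLLl (hΓ1 ▸ hy)
  | vLLr hy => rw [Ctx.del_upd_of_ne hyx.symm]; exact .vLLr (hΓ1 ▸ hy)
  | vLl hy => rw [Ctx.del_upd_of_ne hyx.symm]; exact .vLl (hΓ1 ▸ hy)
  | vLr hy => rw [Ctx.del_upd_of_ne hyx.symm]; exact .vLr (hΓ1 ▸ hy)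
  | vUUl hy => exact .vUUl (hΓ1 ▸ hy)
  | vUUr hy => exact .vUUr (hΓ1 ▸ hy)
  | vUl hy hne => exact .vUl (hΓ1 ▸ hy) hne
  | vUr hy hne => exact .vUr (hΓ1 ▸ hy) hne
  | vEE hy => exact .vEE (hΓ1 ▸ hy)

theorem Check.del_of_lin_output {Γ1 Γ2 : Ctx} {P x p} (h : Check Γ1 P Γ2)
    (hout : Γ2 x = some (.single (.ep (.q .lin p)))) : Check (Γ1.del x) P (Γ2.del x) := by
  have hin := (h.input_eq_of_lin_output hout).trans hout
  induction h with
  | inact => exact .inact _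
  | repl _ ih => exact .repl (ih hout hin)
  | par _ hQ ihP ihQ =>
    have hmid := (hQ.input_eq_of_lin_output hout).trans hout
    exact .par (ihP hmid hin) (ihQ hout hmid)
  | @res Γ1 _ y _ _ _ hT hy _ hO hU ih =>
    have hyx : y ≠ x := ne_of_apply_ne Γ1 (by simp [hy, hin])
    rw [Ctx.del_apply_of_ne hyx.symm] at hout
    have hP := ih hout (by rwa [Ctx.upd_apply_of_ne hyx.symm])
    rw [Ctx.del_upd_of_ne hyx.symm] at hP
    rw [Ctx.del_comm]
    exact .res hT ((Ctx.del_apply_of_ne hyx).trans hy) hP ((Ctx.del_apply_of_ne hyx).trans hO) hU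
  | @outL _ _ _ x0 _ _ _ _ _ hx0 hcv hP hM hUn ih =>
    have hx0x : x0 ≠ x := by rintro rfl; simp [Ctx.upd] at hout
    rw [Ctx.upd_apply_of_ne hx0x.symm] at hout
    have hmid := (hP.input_eq_of_lin_output hout).trans hout
    rw [Ctx.upd_apply_of_ne hx0x.symm] at hmid
    have hcv' := hcv.del_of_lin_output hmid
    have hP' := ih hout (by rwa [Ctx.upd_apply_of_ne hx0x.symm])
    rw [Ctx.del_upd_of_ne hx0x.symm] at hcv' hP' ⊢
    exact .outL ((Ctx.del_apply_of_ne hx0x).trans hx0) hcv' hP'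
      ((Ctx.del_apply_of_ne hx0x).trans hM) hUn
  | @outLl Γ1 _ x0 _ _ _ _ _ hx0 _ hv ih | @outLr Γ1 _ x0 _ _ _ _ _ hx0 _ hv ih
  | @inLl Γ1 _ x0 _ _ _ _ _ hx0 _ hv ih | @inLr Γ1 _ x0 _ _ _ _ _ hx0 _ hv ih =>
    have hx0x : x0 ≠ x := ne_of_apply_ne Γ1 (by simp [hx0, hin])
    rw [Ctx.upd_apply_of_ne hx0x.symm] at hout
    have hP := ih hout (by rwa [Ctx.upd_apply_of_ne hx0x.symm])
    rw [Ctx.del_upd_of_ne hx0x.symm] at hP ⊢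
    have hx0' := (Ctx.del_apply_of_ne hx0x).trans hx0
    have hv' := (Ctx.del_apply_of_ne hx0x).trans hv
    first
    | exact .outLl hx0' hP hv'
    | exact .outLr hx0' hP hv'
    | exact .inLl hx0' hP hv'
    | exact .inLr hx0' hP hv'
  | @outUn _ _ _ x0 _ _ _ _ hx0 hunf hcv hP ih
  | @outUnl _ _ _ x0 _ _ _ _ _ hx0 hunf hcv hP ih
  | @outUnr _ _ _ x0 _ _ _ _ _ hx0 hunf hcv hP ih =>
    have hx0x : x0 ≠ x := by rintro rfl; rw [hin] at hx0; cases hx0 <;> cases hunf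
    have hmid := (hP.input_eq_of_lin_output hout).trans hout
    have hx0' := (Ctx.del_apply_of_ne hx0x).trans hx0
    have hcv' := hcv.del_of_lin_output hmid
    first
    | exact .outUn hx0' hunf hcv' (ih hout hmid)
    | exact .outUnl hx0' hunf hcv' (ih hout hmid)
    | exact .outUnr hx0' hunf hcv' (ih hout hmid)
  | @inL Γ1 _ x0 y _ _ _ _ _ hx0 hy _ hM hUn hO hUO ih =>
    have hx0x : x0 ≠ x := by rintro rfl; simp [Ctx.upd] at hout
    have hyx : y ≠ x := ne_of_apply_ne Γ1 (by simp [hy, hin])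
    rw [Ctx.upd_apply_of_ne hx0x.symm, Ctx.del_apply_of_ne hyx.symm] at hout
    have hP := ih hout (by rwa [Ctx.upd_apply_of_ne hyx.symm, Ctx.upd_apply_of_ne hx0x.symm])
    rw [Ctx.del_upd_of_ne hyx.symm, Ctx.del_upd_of_ne hx0x.symm] at hP
    rw [Ctx.del_upd_of_ne hx0x.symm, Ctx.del_comm]
    exact .inL ((Ctx.del_apply_of_ne hx0x).trans hx0) ((Ctx.del_apply_of_ne hyx).trans hy) hP
      ((Ctx.del_apply_of_ne hx0x).trans hM) hUn ((Ctx.del_apply_of_ne hyx).trans hO) hUO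
  | @inUn Γ1 _ x0 y _ _ _ _ hx0 hunf hy _ hO hUO ih
  | @inUnl Γ1 _ x0 y _ _ _ _ _ hx0 hunf hy _ hO hUO ih
  | @inUnr Γ1 _ x0 y _ _ _ _ _ hx0 hunf hy _ hO hUO ih =>
    have hx0x : x0 ≠ x := by rintro rfl; rw [hin] at hx0; cases hx0 <;> cases hunf
    have hyx : y ≠ x := ne_of_apply_ne Γ1 (by simp [hy, hin])
    rw [Ctx.del_apply_of_ne hyx.symm] at hout
    have hP := ih hout (by rwa [Ctx.upd_apply_of_ne hyx.symm])
    rw [Ctx.del_upd_of_ne hyx.symm] at hP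
    rw [Ctx.del_comm]
    have hx0' := (Ctx.del_apply_of_ne hx0x).trans hx0
    have hy' := (Ctx.del_apply_of_ne hyx).trans hy
    have hO' := (Ctx.del_apply_of_ne hyx).trans hO
    first
    | exact .inUn hx0' hunf hy' hP hO' hUO
    | exact .inUnl hx0' hunf hy' hP hO' hUO
    | exact .inUnr hx0' hunf hy' hP hO' hUO

/-- algorithmic strengthening for linear entries. -/
theorem stmt3 {Γ1 Γ2 : Ctx} {P : Proc} {x : String} {p : PreTy}
    (h : Check Γ1 P Γ2)
    (h1 : Γ1 x = some (.single (.ep (.q .lin p))))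
    (h2 : Γ2 x = some (.single (.ep (.q .lin p)))) :
    Check (Γ1.del x) P (Γ2.del x) :=
  h.del_of_lin_output h2
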